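/- Let n and k be natural numbers with k ≤ n. Then there exists a bijection Φ from the set of triples (s, O, Z), where s is an n-bit string of Hamming weight k, O is a k-factoradic, and Z is an (n−k)-factoradic, onto the set Fact(n) of n-factoradics, such that A_k(Φ(s, O, Z)) = s for every such triple. -/
import Mathlib


/-- An `m`-factoradic: a sequence `(y_{m-1}, …, y_0)` with `0 ≤ y_j ≤ j`, modeled as a
dependent function assigning to each `j : Fin m` an element of `Fin (j+1)`. -/
def Factoradic (m : ℕ) : Type := ∀ j : Fin m, Fin (j.val + 1)

/-- The value `y_j` of a factoradic at position `j` (and `0` for out-of-range `j`). -/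
def factVal {m : ℕ} (y : Factoradic m) (j : ℕ) : ℕ :=
  if h : j < m then (y ⟨j, h⟩).val else 0

/-- `akWeight k n y t` is the number of ones among the first `t` produced bits of the
string `A_k(y)`, i.e. among the bits at positions `n−1, n−2, …, n−t` (produced from
left to right).  At step `t` the bit produced (at position `n−1−t`) is `1` iff
`y (n−1−t) < k − (current weight)`. -/
def akWeight (k n : ℕ) (y : ℕ → ℕ) : ℕ → ℕ
  | 0 => 0
  | t + 1 =>
    akWeight k n y t + (if y (n - 1 - t) < k - akWeight k n y t then 1 else 0)

/-- The bit of `A_k(y)` at position `p` (for `p < n`): letting `H_p = akWeight k n y (n−1−p)`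
be the number of ones among the already-produced bits at positions `> p`, the bit is `1`
iff `y p < k − H_p`. -/
def akBit (k n : ℕ) (y : ℕ → ℕ) (p : ℕ) : Bool :=
  decide (y p < k - akWeight k n y (n - 1 - p))

/-- The `n`-bit string `A_k(y)` produced from an `n`-factoradic `y`. -/
def ak (n k : ℕ) (y : Factoradic n) : Fin n → Bool :=
  fun p => akBit k n (factVal y) p.val



namespace FactAux
open Finset

variable {n : ℕ}

/-- number of ones of `s` at positions `< m`. -/
def ole (s : Fin n → Bool) (m : ℕ) : ℕ :=
  (Finset.univ.filter fun q : Fin n => q.val < m ∧ s q = true).card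

/-- number of zeros of `s` at positions `< m`. -/
def zle (s : Fin n → Bool) (m : ℕ) : ℕ :=
  (Finset.univ.filter fun q : Fin n => q.val < m ∧ s q = false).card

/-- number of ones of `s` at positions `≥ m`. -/
def oge (s : Fin n → Bool) (m : ℕ) : ℕ :=
  (Finset.univ.filter fun q : Fin n => m ≤ q.val ∧ s q = true).card

lemma ole_add_oge (s : Fin n → Bool) (m : ℕ) :
    ole s m + oge s m = (Finset.univ.filter fun p => s p = true).card := by
  classical
  rw [ole, oge,
    show (Finset.univ.filter fun q : Fin n => q.val < m ∧ s q = true)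
      = (Finset.univ.filter fun p => s p = true).filter (fun q => q.val < m) by
        ext q; simp only [Finset.mem_filter, Finset.mem_univ, true_and]; tauto,
    show (Finset.univ.filter fun q : Fin n => m ≤ q.val ∧ s q = true)
      = (Finset.univ.filter fun p => s p = true).filter (fun q => ¬ q.val < m) by
        ext q; simp only [Finset.mem_filter, Finset.mem_univ, true_and, Nat.not_lt]; tauto]
  exact Finset.card_filter_add_card_filter_not _

lemma card_val_lt (m : ℕ) (h : m ≤ n) :
    (Finset.univ.filter fun q : Fin n => q.val < m).card = m := by
  rw [show (Finset.univ.filter fun q : Fin n => q.val < m)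
      = Finset.map (Fin.castLEEmb h) Finset.univ by
        ext q
        simp only [Finset.mem_filter, Finset.mem_univ, true_and, Finset.mem_map]
        constructor
        · intro hq; exact ⟨⟨q.val, hq⟩, rfl⟩
        · rintro ⟨a, rfl⟩; exact a.isLt]
  simp

lemma ole_add_zle (s : Fin n → Bool) (m : ℕ) (h : m ≤ n) :
    ole s m + zle s m = m := by
  classical
  rw [ole, zle,
    show (Finset.univ.filter fun q : Fin n => q.val < m ∧ s q = true)
      = (Finset.univ.filter fun q : Fin n => q.val < m).filter (fun q => s q = true) by
        ext q; simp only [Finset.mem_filter, Finset.mem_univ, true_and],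
    show (Finset.univ.filter fun q : Fin n => q.val < m ∧ s q = false)
      = (Finset.univ.filter fun q : Fin n => q.val < m).filter (fun q => ¬ s q = true) by
        ext q; simp only [Finset.mem_filter, Finset.mem_univ, true_and, Bool.not_eq_true]]
  rw [Finset.card_filter_add_card_filter_not, card_val_lt m h]

lemma ole_succ (s : Fin n → Bool) (m : ℕ) (hm : m < n) :
    ole s (m + 1) = ole s m + (if s ⟨m, hm⟩ = true then 1 else 0) := by
  classical
  by_cases hs : s ⟨m, hm⟩ = true
  · rw [if_pos hs, ole, ole,
      show (Finset.univ.filter fun q : Fin n => q.val < m + 1 ∧ s q = true)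
        = insert ⟨m, hm⟩ (Finset.univ.filter fun q : Fin n => q.val < m ∧ s q = true) by
          ext q
          simp only [Finset.mem_filter, Finset.mem_univ, true_and, Finset.mem_insert]
          constructor
          · rintro ⟨hq, hsq⟩
            rcases Nat.lt_succ_iff_lt_or_eq.1 hq with h' | h'
            · exact Or.inr ⟨h', hsq⟩
            · exact Or.inl (Fin.ext h')
          · rintro (rfl | ⟨hq, hsq⟩)
            · exact ⟨Nat.lt_succ_self m, hs⟩
            · exact ⟨Nat.lt_succ_of_lt hq, hsq⟩]
    rw [Finset.card_insert_of_notMem (by simp)]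
  · have hfe : (Finset.univ.filter fun q : Fin n => q.val < m + 1 ∧ s q = true)
        = (Finset.univ.filter fun q : Fin n => q.val < m ∧ s q = true) := by
      ext q
      simp only [Finset.mem_filter, Finset.mem_univ, true_and]
      constructor
      · rintro ⟨hq, hsq⟩
        rcases Nat.lt_succ_iff_lt_or_eq.1 hq with h' | h'
        · exact ⟨h', hsq⟩
        · exact absurd ((show q = ⟨m, hm⟩ from Fin.ext h') ▸ hsq) hs
      · rintro ⟨hq, hsq⟩; exact ⟨Nat.lt_succ_of_lt hq, hsq⟩
    rw [if_neg hs, ole, ole, hfe]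
    omega

lemma oge_n (s : Fin n → Bool) : oge s n = 0 := by
  rw [oge, Finset.card_eq_zero, Finset.filter_eq_empty_iff]
  intro q _
  simp only [not_and]
  intro h; exact absurd h (Nat.not_le.2 q.isLt)

end FactAux

namespace More
open FactAux Finset

variable {n k : ℕ} (s : Fin n → Bool)

lemma oge_succ (m : ℕ) (hm : m < n) :
    oge s m = oge s (m + 1) + (if s ⟨m, hm⟩ = true then 1 else 0) := by
  have h1 := ole_add_oge s m
  have h2 := ole_add_oge s (m + 1)
  have h3 := ole_succ s m hm
  have h4 : ole s m ≤ ole s (m+1) := by omega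
  omega

lemma ole_lt (hs : (Finset.univ.filter fun p => s p = true).card = k)
    (p : Fin n) (hp : s p = true) : ole s p.val < k := by
  rw [← hs]
  apply Finset.card_lt_card
  rw [Finset.ssubset_iff_of_subset (by intro q hq; simp at hq ⊢; exact hq.2)]
  exact ⟨p, by simp [hp], by simp⟩

lemma card_zeros (hs : (Finset.univ.filter fun p => s p = true).card = k) :
    (Finset.univ.filter fun q => s q = false).card = n - k := by
  have h : (Finset.univ.filter fun q : Fin n => s q = true).card
      + (Finset.univ.filter fun q : Fin n => ¬ s q = true).card = n := by
    rw [Finset.card_filter_add_card_filter_not]; simp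
  rw [hs] at h
  rw [show (Finset.univ.filter fun q : Fin n => s q = false)
      = (Finset.univ.filter fun q : Fin n => ¬ s q = true) by simp [Bool.not_eq_true]]
  omega

lemma zle_lt (hs : (Finset.univ.filter fun p => s p = true).card = k)
    (p : Fin n) (hp : s p = false) : zle s p.val < n - k := by
  rw [← card_zeros s hs]
  apply Finset.card_lt_card
  rw [Finset.ssubset_iff_of_subset (by intro q hq; simp at hq ⊢; exact hq.2)]
  exact ⟨p, by simp [hp], by simp⟩

end More

namespace Main
open FactAux More Finset

def phi (n k : ℕ) (s : Fin n → Bool)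
    (hs : (Finset.univ.filter fun p => s p = true).card = k)
    (O : Factoradic k) (Z : Factoradic (n - k)) : Factoradic n :=
  fun p =>
    if h : s p = true then
      ⟨(O ⟨ole s p.val, ole_lt s hs p h⟩).val, by
        have h1 : (O ⟨ole s p.val, ole_lt s hs p h⟩).val ≤ ole s p.val :=
          Fin.is_le _
        have h2 := ole_add_zle s p.val (le_of_lt p.isLt)
        omega⟩
    else
      ⟨(Z ⟨zle s p.val, zle_lt s hs p (by simpa using h)⟩).val + ole s p.val, by
        have h1 : (Z ⟨zle s p.val, zle_lt s hs p (by simpa using h)⟩).val ≤ zle s p.val :=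
          Fin.is_le _
        have h2 := ole_add_zle s p.val (le_of_lt p.isLt)
        omega⟩

variable {n k : ℕ} (s : Fin n → Bool)
    (hs : (Finset.univ.filter fun p => s p = true).card = k)
    (O : Factoradic k) (Z : Factoradic (n - k))

lemma phi_val_of_true (p : Fin n) (h : s p = true) :
    (phi n k s hs O Z p).val ≤ ole s p.val := by
  simp only [phi, dif_pos h]
  exact Fin.is_le _

lemma phi_val_of_false (p : Fin n) (h : ¬ s p = true) :
    ole s p.val ≤ (phi n k s hs O Z p).val := by
  simp only [phi, dif_neg h]
  exact Nat.le_add_left _ _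

lemma factVal_phi (p : Fin n) :
    factVal (phi n k s hs O Z) p.val = (phi n k s hs O Z p).val :=
  dif_pos p.isLt

lemma akWeight_phi (m : ℕ) (hm : m ≤ n) :
    akWeight k n (factVal (phi n k s hs O Z)) m = oge s (n - m) := by
  induction m with
  | zero => rw [akWeight, Nat.sub_zero, oge_n]
  | succ t ih =>
    have ht : t < n := by omega
    have hp : n - 1 - t < n := by omega
    have hnp : n - (t + 1) = n - 1 - t := by omega
    have hnp2 : n - t = (n - 1 - t) + 1 := by omega
    have ihw : akWeight k n (factVal (phi n k s hs O Z)) t = oge s ((n - 1 - t) + 1) := by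
      rw [ih (by omega), hnp2]
    have hoo := ole_add_oge s ((n - 1 - t) + 1)
    rw [hs] at hoo
    have hco : k - oge s ((n - 1 - t) + 1) = ole s ((n - 1 - t) + 1) := by omega
    have hfv : factVal (phi n k s hs O Z) (n - 1 - t)
        = (phi n k s hs O Z ⟨n - 1 - t, hp⟩).val := dif_pos hp
    have hosucc := ole_succ s (n - 1 - t) hp
    have hgsucc := oge_succ s (n - 1 - t) hp
    rw [akWeight, ihw, hnp, hco, hfv]
    by_cases hb : s ⟨n - 1 - t, hp⟩ = true
    · have h1 := phi_val_of_true s hs O Z ⟨n - 1 - t, hp⟩ hb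
      simp only [Fin.val_mk] at h1
      rw [if_pos hb] at hosucc hgsucc
      rw [if_pos (by omega : (phi n k s hs O Z ⟨n - 1 - t, hp⟩).val < ole s ((n - 1 - t) + 1))]
      omega
    · have h1 := phi_val_of_false s hs O Z ⟨n - 1 - t, hp⟩ hb
      simp only [Fin.val_mk] at h1
      rw [if_neg hb] at hosucc hgsucc
      rw [if_neg (by omega : ¬ (phi n k s hs O Z ⟨n - 1 - t, hp⟩).val < ole s ((n - 1 - t) + 1))]
      omega

lemma ak_phi : ak n k (phi n k s hs O Z) = s := by
  funext p
  have hp : p.val < n := p.isLt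
  have hm : n - (n - 1 - p.val) = p.val + 1 := by omega
  have hw := akWeight_phi s hs O Z (n - 1 - p.val) (by omega)
  rw [hm] at hw
  have hoo := ole_add_oge s (p.val + 1)
  rw [hs] at hoo
  have hco : k - oge s (p.val + 1) = ole s (p.val + 1) := by omega
  have hosucc := ole_succ s p.val hp
  have hfv := factVal_phi s hs O Z p
  show akBit k n (factVal (phi n k s hs O Z)) p.val = s p
  rw [akBit, hw, hco, hfv]
  have hpe : (⟨p.val, hp⟩ : Fin n) = p := rfl
  rw [hpe] at hosucc
  by_cases hb : s p = true
  · have h1 := phi_val_of_true s hs O Z p hb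
    rw [if_pos hb] at hosucc
    rw [hb]
    exact decide_eq_true (by omega)
  · have h1 := phi_val_of_false s hs O Z p hb
    rw [if_neg hb] at hosucc
    rw [Bool.not_eq_true] at hb
    rw [hb]
    exact decide_eq_false (by omega)

end Main

namespace Main2
open FactAux More Main Finset

variable {n k : ℕ}

lemma ole_strict (s : Fin n → Bool) (p p' : Fin n) (h : p < p') (hp : s p = true) :
    ole s p.val < ole s p'.val := by
  have h' : p.val < p'.val := h
  apply Finset.card_lt_card
  rw [Finset.ssubset_iff_of_subset (by
    intro q hq
    simp only [Finset.mem_filter, Finset.mem_univ, true_and] at hq ⊢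
    exact ⟨Nat.lt_trans hq.1 h', hq.2⟩)]
  refine ⟨p, ?_, by simp⟩
  simp only [Finset.mem_filter, Finset.mem_univ, true_and]
  exact ⟨h', hp⟩

lemma zle_strict (s : Fin n → Bool) (p p' : Fin n) (h : p < p') (hp : s p = false) :
    zle s p.val < zle s p'.val := by
  have h' : p.val < p'.val := h
  apply Finset.card_lt_card
  rw [Finset.ssubset_iff_of_subset (by
    intro q hq
    simp only [Finset.mem_filter, Finset.mem_univ, true_and] at hq ⊢
    exact ⟨Nat.lt_trans hq.1 h', hq.2⟩)]
  refine ⟨p, ?_, by simp⟩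
  simp only [Finset.mem_filter, Finset.mem_univ, true_and]
  exact ⟨h', hp⟩

lemma exists_one_index (s : Fin n → Bool)
    (hs : (Finset.univ.filter fun p => s p = true).card = k) (j : Fin k) :
    ∃ p : Fin n, ∃ hb : s p = true, ole s p.val = j.val := by
  classical
  let f : {p : Fin n // s p = true} → Fin k :=
    fun p => ⟨ole s p.1.val, ole_lt s hs p.1 p.2⟩
  have hinj : Function.Injective f := by
    intro a b hab
    have hv : ole s a.1.val = ole s b.1.val := congrArg Fin.val hab
    rcases lt_trichotomy a.1 b.1 with h | h | h
    · exact absurd hv (Nat.ne_of_lt (ole_strict s a.1 b.1 h a.2))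
    · exact Subtype.ext h
    · exact absurd hv.symm (Nat.ne_of_lt (ole_strict s b.1 a.1 h b.2))
  have hcard : Fintype.card {p : Fin n // s p = true} = Fintype.card (Fin k) := by
    rw [Fintype.card_subtype, hs, Fintype.card_fin]
  obtain ⟨p, hp⟩ := ((Fintype.bijective_iff_injective_and_card f).2 ⟨hinj, hcard⟩).2 j
  exact ⟨p.1, p.2, congrArg Fin.val hp⟩

lemma exists_zero_index (s : Fin n → Bool)
    (hs : (Finset.univ.filter fun p => s p = true).card = k) (j : Fin (n - k)) :
    ∃ p : Fin n, ∃ hb : s p = false, zle s p.val = j.val := by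
  classical
  let f : {p : Fin n // s p = false} → Fin (n - k) :=
    fun p => ⟨zle s p.1.val, zle_lt s hs p.1 p.2⟩
  have hinj : Function.Injective f := by
    intro a b hab
    have hv : zle s a.1.val = zle s b.1.val := congrArg Fin.val hab
    rcases lt_trichotomy a.1 b.1 with h | h | h
    · exact absurd hv (Nat.ne_of_lt (zle_strict s a.1 b.1 h a.2))
    · exact Subtype.ext h
    · exact absurd hv.symm (Nat.ne_of_lt (zle_strict s b.1 a.1 h b.2))
  have hcard : Fintype.card {p : Fin n // s p = false} = Fintype.card (Fin (n - k)) := by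
    rw [Fintype.card_subtype, card_zeros s hs, Fintype.card_fin]
  obtain ⟨p, hp⟩ := ((Fintype.bijective_iff_injective_and_card f).2 ⟨hinj, hcard⟩).2 j
  exact ⟨p.1, p.2, congrArg Fin.val hp⟩

lemma phi_inj : Function.Injective
    (fun T : ({s : Fin n → Bool // (Finset.univ.filter (fun p => s p = true)).card = k} ×
        Factoradic k × Factoradic (n - k)) => phi n k T.1.1 T.1.2 T.2.1 T.2.2) := by
  rintro ⟨⟨s1, hs1⟩, O1, Z1⟩ ⟨⟨s2, hs2⟩, O2, Z2⟩ h
  simp only at h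
  have hseq : s1 = s2 := by
    rw [← ak_phi s1 hs1 O1 Z1, ← ak_phi s2 hs2 O2 Z2, h]
  subst hseq
  have hpe : hs1 = hs2 := rfl
  subst hpe
  have hO : O1 = O2 := by
    funext j
    obtain ⟨p, hb, hj⟩ := exists_one_index s1 hs1 j
    have hp := congrFun h p
    simp only [phi, dif_pos hb] at hp
    have hv0 := congrArg Fin.val hp
    simp only [Fin.val_mk] at hv0
    have hv : (O1 ⟨ole s1 p.val, ole_lt s1 hs1 p hb⟩).val
        = (O2 ⟨ole s1 p.val, ole_lt s1 hs1 p hb⟩).val := hv0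
    have hje : (⟨ole s1 p.val, ole_lt s1 hs1 p hb⟩ : Fin k) = j := Fin.ext hj
    rw [hje] at hv
    exact Fin.ext hv
  have hZ : Z1 = Z2 := by
    funext j
    obtain ⟨p, hb, hj⟩ := exists_zero_index s1 hs1 j
    have hb' : ¬ s1 p = true := by simp [hb]
    have hp := congrFun h p
    simp only [phi, dif_neg hb'] at hp
    have hv := congrArg Fin.val hp
    simp only [Fin.val_mk] at hv
    have hv2 : (Z1 ⟨zle s1 p.val, zle_lt s1 hs1 p hb⟩).val
        = (Z2 ⟨zle s1 p.val, zle_lt s1 hs1 p hb⟩).val := by omega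
    have hje : (⟨zle s1 p.val, zle_lt s1 hs1 p hb⟩ : Fin (n - k)) = j := Fin.ext hj
    rw [hje] at hv2
    exact Fin.ext hv2
  rw [hO, hZ]

end Main2

instance factoradicFintype (m : ℕ) : Fintype (Factoradic m) :=
  inferInstanceAs (Fintype (∀ j : Fin m, Fin (j.val + 1)))

instance factoradicDecEq (m : ℕ) : DecidableEq (Factoradic m) :=
  inferInstanceAs (DecidableEq (∀ j : Fin m, Fin (j.val + 1)))

lemma card_factoradic (m : ℕ) : Fintype.card (Factoradic m) = Nat.factorial m := by
  rw [show Fintype.card (Factoradic m) = Fintype.card (∀ j : Fin m, Fin (j.val + 1)) from rfl,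
    Fintype.card_pi]
  simp only [Fintype.card_fin]
  rw [← Finset.prod_range_add_one_eq_factorial m,
    ← Fin.prod_univ_eq_prod_range (fun i => i + 1) m]

def boolEquivFinset (n : ℕ) : (Fin n → Bool) ≃ Finset (Fin n) where
  toFun s := Finset.univ.filter fun p => s p = true
  invFun t := fun p => decide (p ∈ t)
  left_inv s := by funext p; by_cases h : s p = true <;> simp [h]
  right_inv t := by ext p; simp

lemma card_strings (n k : ℕ) :
    Fintype.card {s : Fin n → Bool // (Finset.univ.filter fun p => s p = true).card = k}
      = Nat.choose n k := by
  have e : {s : Fin n → Bool // (Finset.univ.filter fun p => s p = true).card = k}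
      ≃ {t : Finset (Fin n) // t.card = k} :=
    Equiv.subtypeEquiv (boolEquivFinset n) (fun s => Iff.rfl)
  rw [Fintype.card_congr e, Fintype.card_finset_len, Fintype.card_fin]


/-- For `k ≤ n`, there is a bijection `Φ` from triples `(s, O, Z)` — where `s` is an
`n`-bit string of Hamming weight `k`, `O` is a `k`-factoradic and `Z` is an
`(n−k)`-factoradic — onto the set of `n`-factoradics, such that `A_k(Φ(s, O, Z)) = s`. -/
theorem factoradic_triple_equiv (n k : ℕ) (hkn : k ≤ n) :
    ∃ Φ : ({s : Fin n → Bool // (Finset.univ.filter (fun p => s p = true)).card = k} ×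
            Factoradic k × Factoradic (n - k)) ≃ Factoradic n,
      ∀ t, ak n k (Φ t) = (t.1 : Fin n → Bool) := by
  classical
  have hbij : Function.Bijective
      (fun T : ({s : Fin n → Bool // (Finset.univ.filter (fun p => s p = true)).card = k} ×
          Factoradic k × Factoradic (n - k)) => Main.phi n k T.1.1 T.1.2 T.2.1 T.2.2) := by
    rw [Fintype.bijective_iff_injective_and_card]
    refine ⟨Main2.phi_inj, ?_⟩
    rw [Fintype.card_prod, Fintype.card_prod, card_strings, card_factoradic,
      card_factoradic, card_factoradic]
    rw [← Nat.choose_mul_factorial_mul_factorial hkn, Nat.mul_assoc]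
  exact ⟨Equiv.ofBijective _ hbij, fun t => Main.ak_phi t.1.1 t.1.2 t.2.1 t.2.2⟩
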